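/- Under Assumption 1, if p₁ > α and p₂ > 1, then at every mixed Nash equilibrium the expected amount of effective flow satisfies E_{(σ¹*,σ²*)}[F(x^μ)] = (α/(p₁p₂))·Θ; in particular it is strictly less than the expected initial flow Θ/p₂ and strictly decreasing in both p₁ and p₂. -/
import Mathlib


open scoped BigOperators Classical

/-- A capacitated network given by its finite edge set, capacities, per-unit
transportation costs, and the (edge sets of its) `s`-`t` paths and loops. -/
structure Network where
  E : Type
  fin : Fintype E
  dec : DecidableEq E
  /-- edge capacities -/
  c : E → ℝ
  /-- per-unit transportation costs -/
  b : E → ℝ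
  /-- the `s`-`t` paths, identified with their edge sets -/
  P : Finset (Finset E)
  /-- the loops, identified with their edge sets -/
  L : Finset (Finset E)
  c_nonneg : ∀ e, 0 ≤ c e
  b_nonneg : ∀ e, 0 ≤ b e
  P_nonempty : P.Nonempty
  P_edges_nonempty : ∀ p ∈ P, p.Nonempty

attribute [instance] Network.fin Network.dec

namespace Network

variable (N : Network)

/-- All paths and loops. -/
noncomputable def Lam : Finset (Finset N.E) := N.P ∪ N.L

/-- The flow through edge `e` induced by the path/loop flow `y`. -/
noncomputable def edgeFlow (y : Finset N.E → ℝ) (e : N.E) : ℝ :=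
  ∑ l ∈ N.Lam.filter (fun l => e ∈ l), y l

/-- Feasibility of a path/loop flow: nonnegative, supported on paths and loops,
and respecting edge capacities. -/
def Feasible (y : Finset N.E → ℝ) : Prop :=
  (∀ l, 0 ≤ y l) ∧ (∀ l, l ∉ N.Lam → y l = 0) ∧ (∀ e, N.edgeFlow y e ≤ N.c e)

/-- The value `F(x)` of the initial flow: total flow on `s`-`t` paths. -/
noncomputable def val (y : Finset N.E → ℝ) : ℝ := ∑ p ∈ N.P, y p

/-- The value `F(x^μ)` of the effective flow after the attack `μ`:
only the flow on paths avoiding all disrupted edges survives. -/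
noncomputable def effVal (y : Finset N.E → ℝ) (μ : Finset N.E) : ℝ :=
  ∑ p ∈ N.P.filter (fun p => Disjoint p μ), y p

/-- Transportation cost `C₁(x) = Σ b_e x_e`. -/
noncomputable def C1 (y : Finset N.E → ℝ) : ℝ := ∑ e, N.b e * N.edgeFlow y e

/-- Cost of an attack, `C₂(μ) = Σ_{e ∈ μ} c_e`. -/
noncomputable def C2 (μ : Finset N.E) : ℝ := ∑ e ∈ μ, N.c e

/-- Transportation cost of a path. -/
noncomputable def pathCost (p : Finset N.E) : ℝ := ∑ e ∈ p, N.b e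

/-- `α`: the minimum transportation cost over all `s`-`t` paths. -/
noncomputable def alpha : ℝ := sInf (N.pathCost '' ↑N.P)

/-- A cut: a set of edges meeting every `s`-`t` path. -/
def IsCut (K : Finset N.E) : Prop := ∀ p ∈ N.P, ¬ Disjoint p K

/-- A minimum cut: a cut of minimum capacity. -/
def IsMinCut (K : Finset N.E) : Prop := N.IsCut K ∧ ∀ K', N.IsCut K' → N.C2 K ≤ N.C2 K'

/-- `Θ`: the maximum flow value. -/
noncomputable def Theta : ℝ := sSup (N.val '' {y | N.Feasible y})

/-- A maximum flow. -/
def IsMaxFlow (y : Finset N.E → ℝ) : Prop :=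
  N.Feasible y ∧ ∀ z, N.Feasible z → N.val z ≤ N.val y

/-- A maximum flow with minimum transportation cost (an element of `Ω`). -/
def IsMFMC (y : Finset N.E → ℝ) : Prop :=
  N.IsMaxFlow y ∧ ∀ z, N.IsMaxFlow z → N.C1 y ≤ N.C1 z

/-- Assumption 1: `x` is a max-flow with minimum transportation cost all of whose
positively used `s`-`t` paths have transportation cost exactly `α`. -/
def Assumption1 (x : Finset N.E → ℝ) : Prop :=
  N.IsMFMC x ∧ ∀ p ∈ N.P, 0 < x p → N.pathCost p = N.alpha

/-- Defender's payoff `u₁(x,μ) = p₁ F(x^μ) - C₁(x)`. -/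
noncomputable def u1 (p1 : ℝ) (y : Finset N.E → ℝ) (μ : Finset N.E) : ℝ :=
  p1 * N.effVal y μ - N.C1 y

/-- Attacker's payoff `u₂(x,μ) = p₂ F(x - x^μ) - C₂(μ)`. -/
noncomputable def u2 (p2 : ℝ) (y : Finset N.E → ℝ) (μ : Finset N.E) : ℝ :=
  p2 * (N.val y - N.effVal y μ) - N.C2 μ

/-- The defender's action set: feasible flows. -/
def Flow : Type := {y : Finset N.E → ℝ // N.Feasible y}

/-- A (finitely supported) mixed strategy of the defender. -/
def MixedF (σ : N.Flow →₀ ℝ) : Prop := (∀ y, 0 ≤ σ y) ∧ (σ.sum fun _ w => w) = 1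

/-- A mixed strategy of the attacker. -/
def MixedA (σ : Finset N.E → ℝ) : Prop := (∀ μ, 0 ≤ σ μ) ∧ ∑ μ, σ μ = 1

/-- Expectation of a function of the flow under the defender's mixed strategy. -/
noncomputable def expF (σ : N.Flow →₀ ℝ) (g : (Finset N.E → ℝ) → ℝ) : ℝ :=
  σ.sum fun y w => w * g y.1

/-- Expectation of a function of the attack under the attacker's mixed strategy. -/
noncomputable def expA (σ : Finset N.E → ℝ) (h : Finset N.E → ℝ) : ℝ :=
  ∑ μ, σ μ * h μ

/-- Expectation of a function of both actions under a mixed strategy profile. -/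
noncomputable def expFA (σ1 : N.Flow →₀ ℝ) (σ2 : Finset N.E → ℝ)
    (g : (Finset N.E → ℝ) → Finset N.E → ℝ) : ℝ :=
  σ1.sum fun y w => w * ∑ μ, σ2 μ * g y.1 μ

/-- Defender's expected payoff. -/
noncomputable def U1 (p1 : ℝ) (σ1 : N.Flow →₀ ℝ) (σ2 : Finset N.E → ℝ) : ℝ :=
  N.expFA σ1 σ2 (N.u1 p1)

/-- Attacker's expected payoff. -/
noncomputable def U2 (p2 : ℝ) (σ1 : N.Flow →₀ ℝ) (σ2 : Finset N.E → ℝ) : ℝ :=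
  N.expFA σ1 σ2 (N.u2 p2)

/-- Mixed Nash equilibrium. -/
def IsNE (p1 p2 : ℝ) (σ1 : N.Flow →₀ ℝ) (σ2 : Finset N.E → ℝ) : Prop :=
  N.MixedF σ1 ∧ N.MixedA σ2 ∧
  (∀ τ1, N.MixedF τ1 → N.U1 p1 τ1 σ2 ≤ N.U1 p1 σ1 σ2) ∧
  (∀ τ2, N.MixedA τ2 → N.U2 p2 σ1 τ2 ≤ N.U2 p2 σ1 σ2)

/-- Pure Nash equilibrium. -/
def IsPureNE (p1 p2 : ℝ) (x : Finset N.E → ℝ) (μ : Finset N.E) : Prop :=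
  N.Feasible x ∧
  (∀ y, N.Feasible y → N.u1 p1 y μ ≤ N.u1 p1 x μ) ∧
  (∀ ν, N.u2 p2 x ν ≤ N.u2 p2 x μ)

end Network


section Helpers

namespace Network

variable (N : Network)

lemma pathCost_nonneg (p : Finset N.E) : 0 ≤ N.pathCost p :=
  Finset.sum_nonneg fun e _ => N.b_nonneg e

lemma alpha_le_pathCost {p : Finset N.E} (hp : p ∈ N.P) : N.alpha ≤ N.pathCost p := by
  apply csInf_le ((N.P.finite_toSet.image _).bddBelow)
  exact ⟨p, hp, rfl⟩

lemma P_subset_Lam : N.P ⊆ N.Lam := Finset.subset_union_left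

lemma C1_eq (y : Finset N.E → ℝ) : N.C1 y = ∑ l ∈ N.Lam, y l * N.pathCost l := by
  unfold C1 edgeFlow pathCost
  calc ∑ e, N.b e * ∑ l ∈ N.Lam.filter (fun l => e ∈ l), y l
      = ∑ e, ∑ l ∈ N.Lam, if e ∈ l then N.b e * y l else 0 := by
        refine Finset.sum_congr rfl fun e _ => ?_
        rw [Finset.mul_sum, Finset.sum_filter]
    _ = ∑ l ∈ N.Lam, ∑ e, if e ∈ l then N.b e * y l else 0 := Finset.sum_comm
    _ = ∑ l ∈ N.Lam, y l * ∑ e ∈ l, N.b e := by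
        refine Finset.sum_congr rfl fun l _ => ?_
        rw [Finset.sum_ite_mem, Finset.univ_inter, Finset.mul_sum]
        exact Finset.sum_congr rfl fun e _ => by ring

lemma C1_ge {y : Finset N.E → ℝ} (hy : N.Feasible y) : N.alpha * N.val y ≤ N.C1 y := by
  rw [C1_eq, val, Finset.mul_sum]
  calc ∑ p ∈ N.P, N.alpha * y p ≤ ∑ p ∈ N.P, y p * N.pathCost p := by
        refine Finset.sum_le_sum fun p hp => ?_
        rw [mul_comm N.alpha (y p)]
        exact mul_le_mul_of_nonneg_left (N.alpha_le_pathCost hp) (hy.1 p)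
    _ ≤ ∑ l ∈ N.Lam, y l * N.pathCost l := by
        refine Finset.sum_le_sum_of_subset_of_nonneg N.P_subset_Lam fun l _ _ => ?_
        exact mul_nonneg (hy.1 l) (N.pathCost_nonneg l)

lemma nonempty_E : Nonempty N.E := by
  obtain ⟨p, hp⟩ := N.P_nonempty
  obtain ⟨e, _⟩ := N.P_edges_nonempty p hp
  exact ⟨e⟩

lemma destroyed_le {y : Finset N.E → ℝ} (hy : N.Feasible y) (μ : Finset N.E) :
    N.val y - N.effVal y μ ≤ N.C2 μ := by
  have := N.nonempty_E
  classical
  set e0 : N.E := Classical.arbitrary N.E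
  set f : Finset N.E → N.E := fun p =>
    if h : (p ∩ μ).Nonempty then h.choose else e0 with hf
  have key : N.val y - N.effVal y μ
      = ∑ p ∈ N.P.filter (fun p => ¬ Disjoint p μ), y p := by
    rw [val, effVal, ← Finset.sum_filter_add_sum_filter_not N.P (fun p => Disjoint p μ)]
    ring
  rw [key]
  set H := N.P.filter (fun p => ¬ Disjoint p μ) with hH
  have hmem : ∀ p ∈ H, f p ∈ p ∩ μ := by
    intro p hp
    rw [hH, Finset.mem_filter] at hp
    have hne : (p ∩ μ).Nonempty := by
      rw [Finset.not_disjoint_iff] at hp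
      obtain ⟨e, he1, he2⟩ := hp.2
      exact ⟨e, Finset.mem_inter.mpr ⟨he1, he2⟩⟩
    simp only [hf, dif_pos hne]
    exact hne.choose_spec
  have hmaps : ∀ p ∈ H, f p ∈ μ := fun p hp => (Finset.mem_inter.mp (hmem p hp)).2
  calc ∑ p ∈ H, y p
      = ∑ e ∈ μ, ∑ p ∈ H.filter (fun p => f p = e), y p :=
        (Finset.sum_fiberwise_of_maps_to hmaps y).symm
    _ ≤ ∑ e ∈ μ, N.edgeFlow y e := by
        refine Finset.sum_le_sum fun e he => ?_
        unfold edgeFlow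
        refine Finset.sum_le_sum_of_subset_of_nonneg ?_ (fun l _ _ => hy.1 l)
        intro p hp
        rw [Finset.mem_filter] at hp ⊢
        refine ⟨N.P_subset_Lam (Finset.mem_filter.mp hp.1).1, ?_⟩
        have := hmem p hp.1
        rw [hp.2] at this
        exact (Finset.mem_inter.mp this).1
    _ ≤ N.C2 μ := Finset.sum_le_sum fun e _ => hy.2.2 e

lemma effVal_cut (y : Finset N.E → ℝ) {K : Finset N.E} (hK : N.IsCut K) :
    N.effVal y K = 0 := by
  unfold effVal
  rw [Finset.filter_false_of_mem, Finset.sum_empty]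
  exact fun p hp => hK p hp

lemma effVal_empty (y : Finset N.E → ℝ) : N.effVal y ∅ = N.val y := by
  unfold effVal val
  rw [Finset.filter_true_of_mem]
  exact fun p _ => Finset.disjoint_empty_right p

lemma feasible_zero : N.Feasible (fun _ => 0) := by
  refine ⟨fun _ => le_refl 0, fun _ _ => rfl, fun e => ?_⟩
  unfold edgeFlow
  rw [Finset.sum_const_zero]
  exact N.c_nonneg e

lemma val_maxflow_eq_Theta {x : Finset N.E → ℝ} (hx : N.IsMaxFlow x) :
    N.val x = N.Theta := by
  symm
  apply IsGreatest.csSup_eq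
  exact ⟨⟨x, hx.1, rfl⟩, by rintro _ ⟨z, hz, rfl⟩; exact hx.2 z hz⟩

lemma C1_A1 {x : Finset N.E → ℝ} (hx : N.Assumption1 x) :
    N.C1 x = N.alpha * N.val x := by
  classical
  obtain ⟨⟨⟨hfeas, hmax⟩, hmc⟩, hpaths⟩ := hx
  set z : Finset N.E → ℝ := fun l => if l ∈ N.P then x l else 0 with hz
  have hzfeas : N.Feasible z := by
    refine ⟨fun l => ?_, fun l hl => ?_, fun e => ?_⟩
    · rw [hz]; dsimp only; split
      · exact hfeas.1 l
      · exact le_refl 0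
    · rw [hz]; dsimp only
      rw [if_neg (fun hmem => hl (N.P_subset_Lam hmem))]
    · refine le_trans (Finset.sum_le_sum fun l _ => ?_) (hfeas.2.2 e)
      rw [hz]; dsimp only; split
      · exact le_refl _
      · exact hfeas.1 l
  have hzval : N.val z = N.val x := by
    unfold val
    exact Finset.sum_congr rfl fun p hp => by rw [hz]; exact if_pos hp
  have hzmax : N.IsMaxFlow z := ⟨hzfeas, fun w hw => hzval ▸ hmax w hw⟩
  have hle : N.C1 x ≤ N.C1 z := hmc z hzmax
  have hge : N.C1 z ≤ N.C1 x := by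
    rw [C1_eq, C1_eq]
    refine Finset.sum_le_sum fun l _ => ?_
    refine mul_le_mul_of_nonneg_right ?_ (N.pathCost_nonneg l)
    rw [hz]; dsimp only; split
    · exact le_refl _
    · exact hfeas.1 l
  have hC1z : N.C1 z = ∑ p ∈ N.P, x p * N.pathCost p := by
    rw [C1_eq]
    rw [← Finset.sum_filter_add_sum_filter_not N.Lam (fun l => l ∈ N.P)]
    have h2 : ∑ l ∈ N.Lam.filter (fun l => l ∉ N.P), z l * N.pathCost l = 0 := by
      refine Finset.sum_eq_zero fun l hl => ?_
      rw [Finset.mem_filter] at hl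
      rw [hz]; dsimp only
      rw [if_neg hl.2, zero_mul]
    rw [h2, add_zero]
    have h3 : N.Lam.filter (fun l => l ∈ N.P) = N.P := by
      apply Finset.ext
      intro l
      simp only [Finset.mem_filter]
      exact ⟨fun h => h.2, fun h => ⟨N.P_subset_Lam h, h⟩⟩
    rw [h3]
    exact Finset.sum_congr rfl fun p hp => by rw [hz]; dsimp only; rw [if_pos hp]
  have : N.C1 x = ∑ p ∈ N.P, x p * N.pathCost p := le_antisymm (hC1z ▸ hle) (hC1z ▸ hge)
  rw [this, val, Finset.mul_sum]
  refine Finset.sum_congr rfl fun p hp => ?_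
  rcases (hfeas.1 p).lt_or_eq with h | h
  · rw [hpaths p hp h, mul_comm]
  · rw [← h, zero_mul, mul_zero]

end Network

end Helpers


lemma flow_arith (a p1 p2 Th q T cb kb Phi : ℝ)
    (halpha : 0 < a) (hp1 : a < p1) (hp2 : 1 < p2)
    (hdev0 : 0 ≤ p1*q - cb) (hdevx : p1*Phi - a*Th ≤ p1*q - cb)
    (hdevE : 0 ≤ p2*(T-q) - kb) (hdevK : p2*T - Th ≤ p2*(T-q) - kb)
    (hcb : a*T ≤ cb) (hPhi : Th - kb ≤ Phi) :
    p1*p2*q = a*Th := by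
  have hp1pos : 0 < p1 := lt_trans halpha hp1
  have hp2pos : 0 < p2 := lt_trans one_pos hp2
  have hi : p1*Th - p1*p2*T + p1*p2*q - a*Th + a*T ≤ p1*q := by
    have e1 : p1*(Th - kb) ≤ p1*Phi := mul_le_mul_of_nonneg_left hPhi hp1pos.le
    have e2 : p1*kb ≤ p1*(p2*(T - q)) :=
      mul_le_mul_of_nonneg_left (by linarith) hp1pos.le
    nlinarith [hdevx, hcb]
  have hii : a*T ≤ p1*q := le_trans hcb (by linarith)
  have hlow : a*Th ≤ p1*p2*q := by
    nlinarith [mul_le_mul_of_nonneg_left hi halpha.le,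
      mul_le_mul_of_nonneg_left hii
        (by nlinarith [le_mul_of_one_le_right hp1pos.le hp2.le] : (0:ℝ) ≤ p1*p2 - a),
      sub_pos.mpr hp1]
  have hT2 : Th ≤ p2*T := by
    nlinarith [hi, mul_le_mul_of_nonneg_left hii (by linarith : (0:ℝ) ≤ p2 - 1),
      sub_pos.mpr hp1]
  have hv : p1*p2*q - a*Th ≤ p1*q - a*T := by
    have e1 : p1*(Th - kb) ≤ p1*Phi := mul_le_mul_of_nonneg_left hPhi hp1pos.le
    have e4 : p1*(p2*q) ≤ p1*(Th - kb) :=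
      mul_le_mul_of_nonneg_left (by linarith [hdevK] : p2*q ≤ Th - kb) hp1pos.le
    nlinarith [hdevx, hcb]
  have hup : p1*p2*q ≤ a*Th := by
    nlinarith [mul_le_mul_of_nonneg_left hv hp2pos.le,
      mul_le_mul_of_nonneg_left hT2 halpha.le, sub_pos.mpr hp2]
  linarith

/-- under Assumption 1, if `p₁ > α` and `p₂ > 1` (with `0 < α` and `Θ > 0`),
then at every mixed Nash equilibrium the expected amount of effective flow equals
`(α/(p₁p₂))·Θ`; in particular it is strictly less than the expected initial flow `Θ/p₂`,
and it is strictly decreasing in both `p₁` and `p₂`. -/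
theorem expected_effective_flow (N : Network) (p1 p2 : ℝ)
    (halpha : 0 < N.alpha) (hp1 : N.alpha < p1) (hp2 : 1 < p2)
    (hTheta : 0 < N.Theta)
    (hA1 : ∃ x, N.Assumption1 x)
    (hMFMC : ∃ K, N.IsMinCut K ∧ N.C2 K = N.Theta)
    (σ1 : N.Flow →₀ ℝ) (σ2 : Finset N.E → ℝ)
    (hNE : N.IsNE p1 p2 σ1 σ2) :
    N.expFA σ1 σ2 N.effVal = (N.alpha / (p1 * p2)) * N.Theta ∧
    N.expFA σ1 σ2 N.effVal < N.Theta / p2 ∧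
    (∀ q1, p1 < q1 → (N.alpha / (q1 * p2)) * N.Theta < (N.alpha / (p1 * p2)) * N.Theta) ∧
    (∀ q2, p2 < q2 → (N.alpha / (p1 * q2)) * N.Theta < (N.alpha / (p1 * p2)) * N.Theta) := by
  classical
  obtain ⟨x, hx⟩ := hA1
  obtain ⟨K, hKmin, hKval⟩ := hMFMC
  obtain ⟨⟨hσ1nn, hσ1sum⟩, ⟨hσ2nn, hσ2sum⟩, hDef, hAtk⟩ := hNE
  have hxfeas : N.Feasible x := hx.1.1.1
  have hxval : N.val x = N.Theta := N.val_maxflow_eq_Theta hx.1.1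
  have hxC1 : N.C1 x = N.alpha * N.Theta := by rw [N.C1_A1 hx, hxval]
  have hp1pos : 0 < p1 := lt_trans halpha hp1
  have hp2pos : 0 < p2 := lt_trans one_pos hp2
  have hw1 : ∑ y ∈ σ1.support, σ1 y = 1 := hσ1sum
  have hexp : ∀ (σ : N.Flow →₀ ℝ) (τ : Finset N.E → ℝ)
      (g : (Finset N.E → ℝ) → Finset N.E → ℝ),
      N.expFA σ τ g = ∑ y ∈ σ.support, σ y * ∑ μ, τ μ * g y.1 μ := fun _ _ _ => rfl
  obtain ⟨T, hTdef⟩ : ∃ t, t = ∑ y ∈ σ1.support, σ1 y * N.val y.1 := ⟨_, rfl⟩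
  obtain ⟨cb, hcbdef⟩ : ∃ t, t = ∑ y ∈ σ1.support, σ1 y * N.C1 y.1 := ⟨_, rfl⟩
  obtain ⟨kb, hkbdef⟩ : ∃ t, t = ∑ μ, σ2 μ * N.C2 μ := ⟨_, rfl⟩
  obtain ⟨Phi, hPhidef⟩ : ∃ t, t = ∑ μ, σ2 μ * N.effVal x μ := ⟨_, rfl⟩
  generalize hqdef : N.expFA σ1 σ2 N.effVal = q
  have hqe : q = ∑ y ∈ σ1.support, σ1 y * ∑ μ, σ2 μ * N.effVal y.1 μ := by
    rw [← hqdef]; exact hexp σ1 σ2 N.effVal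
  have inner_eval : ∀ (E : Finset N.E → ℝ) (a c : ℝ),
      ∑ μ, σ2 μ * (a * E μ - c) = a * (∑ μ, σ2 μ * E μ) - c := by
    intro E a c
    calc ∑ μ, σ2 μ * (a * E μ - c) = ∑ μ, (a * (σ2 μ * E μ) - σ2 μ * c) :=
          Finset.sum_congr rfl fun μ _ => by ring
      _ = a * (∑ μ, σ2 μ * E μ) - (∑ μ, σ2 μ) * c := by
          rw [Finset.sum_sub_distrib, ← Finset.mul_sum, ← Finset.sum_mul]
      _ = _ := by rw [hσ2sum, one_mul]
  have inner_eval2 : ∀ (E : Finset N.E → ℝ) (v : ℝ),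
      ∑ μ, σ2 μ * (p2 * (v - E μ) - N.C2 μ)
        = p2 * v - p2 * (∑ μ, σ2 μ * E μ) - kb := by
    intro E v
    calc ∑ μ, σ2 μ * (p2 * (v - E μ) - N.C2 μ)
        = ∑ μ, (p2 * (σ2 μ * v) - p2 * (σ2 μ * E μ) - σ2 μ * N.C2 μ) :=
          Finset.sum_congr rfl fun μ _ => by ring
      _ = p2 * ((∑ μ, σ2 μ) * v) - p2 * (∑ μ, σ2 μ * E μ) - ∑ μ, σ2 μ * N.C2 μ := by
          rw [Finset.sum_sub_distrib, Finset.sum_sub_distrib, ← Finset.mul_sum,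
            ← Finset.mul_sum, ← Finset.sum_mul]
      _ = _ := by rw [hσ2sum, one_mul, ← hkbdef]
  -- value of the defender's payoff
  have hU1 : N.U1 p1 σ1 σ2 = p1 * q - cb := by
    have h0 : N.U1 p1 σ1 σ2 = ∑ y ∈ σ1.support,
        σ1 y * ∑ μ, σ2 μ * (p1 * N.effVal y.1 μ - N.C1 y.1) := hexp σ1 σ2 _
    have h1 : ∀ y ∈ σ1.support,
        σ1 y * ∑ μ, σ2 μ * (p1 * N.effVal y.1 μ - N.C1 y.1)
        = p1 * (σ1 y * ∑ μ, σ2 μ * N.effVal y.1 μ) - σ1 y * N.C1 y.1 := by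
      intro y _
      rw [inner_eval]; ring
    rw [h0, Finset.sum_congr rfl h1, Finset.sum_sub_distrib, ← Finset.mul_sum,
      ← hqe, ← hcbdef]
  -- value of the attacker's payoff
  have hU2 : N.U2 p2 σ1 σ2 = p2 * (T - q) - kb := by
    have h0 : N.U2 p2 σ1 σ2 = ∑ y ∈ σ1.support,
        σ1 y * ∑ μ, σ2 μ * (p2 * (N.val y.1 - N.effVal y.1 μ) - N.C2 μ) := hexp σ1 σ2 _
    have h1 : ∀ y ∈ σ1.support,
        σ1 y * ∑ μ, σ2 μ * (p2 * (N.val y.1 - N.effVal y.1 μ) - N.C2 μ)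
        = p2 * (σ1 y * N.val y.1) - p2 * (σ1 y * ∑ μ, σ2 μ * N.effVal y.1 μ)
          - σ1 y * kb := by
      intro y _
      rw [inner_eval2]; ring
    rw [h0, Finset.sum_congr rfl h1, Finset.sum_sub_distrib, Finset.sum_sub_distrib,
      ← Finset.mul_sum, ← Finset.mul_sum, ← Finset.sum_mul, hw1, one_mul,
      ← hqe, ← hTdef]
    ring
  -- defender deviation: zero flow
  have hdev0 : 0 ≤ p1 * q - cb := by
    rw [← hU1]
    set z0 : N.Flow := ⟨fun _ => 0, N.feasible_zero⟩ with hz0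
    have hmix : N.MixedF (Finsupp.single z0 1) := by
      constructor
      · intro y
        rw [Finsupp.single_apply]
        split <;> norm_num
      · rw [Finsupp.sum_single_index]; rfl
    have hval : N.U1 p1 (Finsupp.single z0 1) σ2 = 0 := by
      have h0 : N.U1 p1 (Finsupp.single z0 1) σ2
          = (Finsupp.single z0 (1:ℝ)).sum
            (fun y w => w * ∑ μ, σ2 μ * (p1 * N.effVal y.1 μ - N.C1 y.1)) := rfl
      rw [h0, Finsupp.sum_single_index (by simp), one_mul]
      have hz1 : z0.1 = fun _ => 0 := rfl
      rw [hz1]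
      have he : ∀ μ, N.effVal (fun _ => 0) μ = 0 := by
        intro μ; unfold Network.effVal; exact Finset.sum_const_zero
      have hc : N.C1 (fun _ => 0) = 0 := by
        unfold Network.C1 Network.edgeFlow
        simp
      refine Finset.sum_eq_zero fun μ _ => ?_
      rw [he, hc]; ring
    rw [← hval]
    exact hDef _ hmix
  -- defender deviation: the MFMC flow x
  have hdevx : p1 * Phi - N.alpha * N.Theta ≤ p1 * q - cb := by
    rw [← hU1]
    set zx : N.Flow := ⟨x, hxfeas⟩ with hzx
    have hmix : N.MixedF (Finsupp.single zx 1) := by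
      constructor
      · intro y
        rw [Finsupp.single_apply]
        split <;> norm_num
      · rw [Finsupp.sum_single_index]; rfl
    have hval : N.U1 p1 (Finsupp.single zx 1) σ2 = p1 * Phi - N.alpha * N.Theta := by
      have h0 : N.U1 p1 (Finsupp.single zx 1) σ2
          = (Finsupp.single zx (1:ℝ)).sum
            (fun y w => w * ∑ μ, σ2 μ * (p1 * N.effVal y.1 μ - N.C1 y.1)) := rfl
      rw [h0, Finsupp.sum_single_index (by simp), one_mul]
      have hz1 : zx.1 = x := rfl
      rw [hz1, hxC1, inner_eval, ← hPhidef]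
    rw [← hval]
    exact hDef _ hmix
  -- attacker deviation: empty attack
  have hdevE : 0 ≤ p2 * (T - q) - kb := by
    rw [← hU2]
    have hmix : N.MixedA (fun μ => if μ = (∅ : Finset N.E) then 1 else 0) := by
      constructor
      · intro μ; dsimp only; split <;> norm_num
      · simp
    have hval : N.U2 p2 σ1 (fun μ => if μ = (∅ : Finset N.E) then 1 else 0) = 0 := by
      have h0 : N.U2 p2 σ1 (fun μ => if μ = (∅ : Finset N.E) then 1 else 0)
          = ∑ y ∈ σ1.support, σ1 y * ∑ μ, (if μ = (∅ : Finset N.E) then (1:ℝ) else 0)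
            * (p2 * (N.val y.1 - N.effVal y.1 μ) - N.C2 μ) := hexp σ1 _ _
      rw [h0]
      refine Finset.sum_eq_zero fun y _ => ?_
      have h1 : ∑ μ, (if μ = (∅ : Finset N.E) then (1:ℝ) else 0)
          * (p2 * (N.val y.1 - N.effVal y.1 μ) - N.C2 μ)
          = p2 * (N.val y.1 - N.effVal y.1 ∅) - N.C2 ∅ := by
        simp only [ite_mul, one_mul, zero_mul]
        rw [Finset.sum_ite_eq' Finset.univ (∅ : Finset N.E)]
        simp
      rw [h1, N.effVal_empty]
      have : N.C2 (∅ : Finset N.E) = 0 := by unfold Network.C2; simp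
      rw [this]; ring
    rw [← hval]
    exact hAtk _ hmix
  -- attacker deviation: the minimum cut K
  have hdevK : p2 * T - N.Theta ≤ p2 * (T - q) - kb := by
    rw [← hU2]
    have hmix : N.MixedA (fun μ => if μ = K then 1 else 0) := by
      constructor
      · intro μ; dsimp only; split <;> norm_num
      · simp
    have hval : N.U2 p2 σ1 (fun μ => if μ = K then 1 else 0) = p2 * T - N.Theta := by
      have h0 : N.U2 p2 σ1 (fun μ => if μ = K then 1 else 0)
          = ∑ y ∈ σ1.support, σ1 y * ∑ μ, (if μ = K then (1:ℝ) else 0)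
            * (p2 * (N.val y.1 - N.effVal y.1 μ) - N.C2 μ) := hexp σ1 _ _
      rw [h0]
      have h1 : ∀ y ∈ σ1.support, σ1 y * ∑ μ, (if μ = K then (1:ℝ) else 0)
          * (p2 * (N.val y.1 - N.effVal y.1 μ) - N.C2 μ)
          = p2 * (σ1 y * N.val y.1) - σ1 y * N.Theta := by
        intro y _
        have h2 : ∑ μ, (if μ = K then (1:ℝ) else 0)
            * (p2 * (N.val y.1 - N.effVal y.1 μ) - N.C2 μ)
            = p2 * (N.val y.1 - N.effVal y.1 K) - N.C2 K := by
          simp only [ite_mul, one_mul, zero_mul]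
          rw [Finset.sum_ite_eq' Finset.univ K]
          simp
        rw [h2, N.effVal_cut y.1 hKmin.1, hKval]; ring
      rw [Finset.sum_congr rfl h1, Finset.sum_sub_distrib, ← Finset.mul_sum,
        ← Finset.sum_mul, hw1, one_mul, ← hTdef]
    rw [← hval]
    exact hAtk _ hmix
  -- pointwise bound: transportation cost at least α per unit
  have hcb : N.alpha * T ≤ cb := by
    rw [hTdef, hcbdef, Finset.mul_sum]
    refine Finset.sum_le_sum fun y _ => ?_
    have := N.C1_ge y.2
    calc N.alpha * (σ1 y * N.val y.1) = σ1 y * (N.alpha * N.val y.1) := by ring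
      _ ≤ σ1 y * N.C1 y.1 := mul_le_mul_of_nonneg_left this (hσ1nn y)
  -- pointwise bound: expected surviving MFMC flow
  have hPhi : N.Theta - kb ≤ Phi := by
    have h0 : N.Theta - kb = ∑ μ, σ2 μ * (N.Theta - N.C2 μ) := by
      have h1 : ∑ μ, σ2 μ * (N.Theta - N.C2 μ)
          = ∑ μ, (σ2 μ * N.Theta - σ2 μ * N.C2 μ) :=
        Finset.sum_congr rfl fun μ _ => by ring
      rw [h1, Finset.sum_sub_distrib, ← Finset.sum_mul, hσ2sum, one_mul, ← hkbdef]
    rw [h0, hPhidef]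
    refine Finset.sum_le_sum fun μ _ => ?_
    refine mul_le_mul_of_nonneg_left ?_ (hσ2nn μ)
    have hd := N.destroyed_le hxfeas μ
    rw [hxval] at hd
    linarith
  have hkey : p1*p2*q = N.alpha*N.Theta :=
    flow_arith N.alpha p1 p2 N.Theta q T cb kb Phi halpha hp1 hp2
      hdev0 hdevx hdevE hdevK hcb hPhi
  have hne : (p1*p2) ≠ 0 := by positivity
  have hqval : q = N.alpha/(p1*p2)*N.Theta := by
    rw [div_mul_eq_mul_div, eq_div_iff hne]
    linarith [hkey]
  refine ⟨hqval, ?_, ?_, ?_⟩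
  · rw [hqval, div_mul_eq_mul_div, div_lt_div_iff₀ (by positivity) hp2pos]
    nlinarith [mul_pos (mul_pos hTheta hp2pos) (sub_pos.mpr hp1)]
  · intro q1 hq1
    rw [div_mul_eq_mul_div, div_mul_eq_mul_div]
    apply div_lt_div_of_pos_left (by positivity) (by positivity)
    nlinarith
  · intro q2 hq2
    rw [div_mul_eq_mul_div, div_mul_eq_mul_div]
    apply div_lt_div_of_pos_left (by positivity) (by positivity)
    nlinarith
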